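/- Let x > 0, R > 0, θ ∈ ℝ, and set η = (R + 1/R)·cos θ + i·((R − 1/R)·sin θ − x). Then |η|² = R² + R⁻² + 2·cos(2θ) − 2·x·(R − 1/R)·sin θ + x². In particular, if R ≥ 1 and θ ∈ [0, π/4], then |η|² ≥ R² − √2·x·R + x² ≥ (1 − √2/2)·(R² + x²). -/

import Mathlib

/-!
Expanding `|η|²` and using `(R + 1/R)² cos² θ + (R − 1/R)² sin² θ = R² + R⁻² + 2 cos 2θ` gives the
identity. For `R ≥ 1` and `θ ∈ [0, π/4]` we have `cos 2θ ≥ 0`, `0 ≤ sin θ ≤ √2/2` and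
`0 ≤ R − 1/R ≤ R`, so the cross term is at most `√2·xR`; finally
`R² − √2·xR + x² − (1 − √2/2)(R² + x²) = (√2/2)(R − x)²`.
-/

open Real

theorem norm_sq_ofReal_add_I_mul_ofReal (a b : ℝ) :
    ‖(a : ℂ) + Complex.I * (b : ℂ)‖ ^ 2 = a ^ 2 + b ^ 2 := by
  rw [Complex.sq_norm, mul_comm, Complex.normSq_add_mul_I]

theorem norm_sq_joukowski_sub_I_mul {R : ℝ} (hR : R ≠ 0) (x θ : ℝ) :
    ‖(((R + 1 / R) * cos θ : ℝ) : ℂ) + Complex.I * (((R - 1 / R) * sin θ - x : ℝ) : ℂ)‖ ^ 2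
      = R ^ 2 + (1 / R) ^ 2 + 2 * cos (2 * θ) - 2 * x * (R - 1 / R) * sin θ + x ^ 2 := by
  rw [norm_sq_ofReal_add_I_mul_ofReal, cos_two_mul]
  have hinv : R * (1 / R) = 1 := mul_one_div_cancel hR
  linear_combination (R ^ 2 + (1 / R) ^ 2 - 2) * sin_sq_add_cos_sq θ
    + (2 * cos θ ^ 2 - 2 * sin θ ^ 2) * hinv

theorem sin_le_sqrt_two_div_two_of_mem_Icc {θ : ℝ} (hθ : θ ∈ Set.Icc 0 (π / 4)) :
    sin θ ≤ √2 / 2 := by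
  rw [← sin_pi_div_four]
  exact sin_le_sin_of_le_of_le_pi_div_two (by linarith [pi_pos, hθ.1]) (by linarith [pi_pos])
    hθ.2

theorem sub_one_div_le_self_of_one_le {R : ℝ} (hR : 1 ≤ R) : R - 1 / R ≤ R := by
  have : 0 < 1 / R := by positivity
  linarith

theorem zero_le_sub_one_div_of_one_le {R : ℝ} (hR : 1 ≤ R) : 0 ≤ R - 1 / R := by
  have : 1 / R ≤ 1 := div_le_one_of_le₀ hR (by linarith)
  linarith

theorem two_mul_sub_one_div_mul_sin_le {x R θ : ℝ} (hx : 0 ≤ x) (hR : 1 ≤ R)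
    (hθ : θ ∈ Set.Icc 0 (π / 4)) :
    2 * x * (R - 1 / R) * sin θ ≤ √2 * x * R :=
  calc 2 * x * (R - 1 / R) * sin θ
      ≤ 2 * x * (R - 1 / R) * (√2 / 2) := by
        have := zero_le_sub_one_div_of_one_le hR
        gcongr
        exact sin_le_sqrt_two_div_two_of_mem_Icc hθ
    _ = √2 * x * (R - 1 / R) := by ring
    _ ≤ √2 * x * R := by gcongr; exact sub_one_div_le_self_of_one_le hR

theorem sq_sub_sqrt_two_mul_mul_add_sq_le {x R θ : ℝ} (hx : 0 ≤ x) (hR : 1 ≤ R)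
    (hθ : θ ∈ Set.Icc 0 (π / 4)) :
    R ^ 2 - √2 * x * R + x ^ 2
      ≤ R ^ 2 + (1 / R) ^ 2 + 2 * cos (2 * θ) - 2 * x * (R - 1 / R) * sin θ + x ^ 2 := by
  have hcos : 0 ≤ cos (2 * θ) :=
    cos_nonneg_of_mem_Icc ⟨by linarith [pi_pos, hθ.1], by linarith [hθ.2]⟩
  have hcross := two_mul_sub_one_div_mul_sin_le hx hR hθ
  nlinarith [sq_nonneg (1 / R)]

theorem one_sub_sqrt_two_div_two_mul_le (a b : ℝ) :
    (1 - √2 / 2) * (a ^ 2 + b ^ 2) ≤ a ^ 2 - √2 * a * b + b ^ 2 := by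
  have h : a ^ 2 - √2 * a * b + b ^ 2 - (1 - √2 / 2) * (a ^ 2 + b ^ 2) = √2 / 2 * (a - b) ^ 2 := by
    ring
  have : 0 ≤ √2 / 2 * (a - b) ^ 2 := by positivity
  linarith

/-- For `η = (R + 1/R)cos θ + i((R − 1/R)sin θ − x)` with `R, x > 0`,
`|η|² = R² + R⁻² + 2cos 2θ − 2x(R − 1/R)sin θ + x²`; and if `R ≥ 1` and
`θ ∈ [0, π/4]` then `|η|² ≥ R² − √2·xR + x² ≥ (1 − √2/2)(R² + x²)`. -/
theorem stmt9 (x R θ : ℝ) (hx : 0 < x) (hR : 0 < R) :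
    let η : ℂ := ((R + 1 / R) * Real.cos θ : ℝ) +
      Complex.I * (((R - 1 / R) * Real.sin θ - x : ℝ) : ℂ)
    (‖η‖ ^ 2
        = R ^ 2 + (1 / R) ^ 2 + 2 * Real.cos (2 * θ)
          - 2 * x * (R - 1 / R) * Real.sin θ + x ^ 2) ∧
    (1 ≤ R → θ ∈ Set.Icc 0 (Real.pi / 4) →
      (R ^ 2 - Real.sqrt 2 * x * R + x ^ 2 ≤ ‖η‖ ^ 2 ∧
        (1 - Real.sqrt 2 / 2) * (R ^ 2 + x ^ 2)
          ≤ R ^ 2 - Real.sqrt 2 * x * R + x ^ 2)) := by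
  intro η
  have hη := norm_sq_joukowski_sub_I_mul hR.ne' x θ
  refine ⟨hη, fun hR1 hθ => ⟨?_, (one_sub_sqrt_two_div_two_mul_le R x).trans_eq (by ring)⟩⟩
  rw [hη]
  exact sq_sub_sqrt_two_mul_mul_add_sq_le hx.le hR1 hθ
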